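/- arXiv:2305.07213 — 2 statements merged into one kernel-verified Lean document; each statement's English description precedes it below -/
import Mathlib

section
/- (Theorem 1 / Theorem 2, single view.) Let x_1, ..., x_N ∈ ℝ^d, let A_1, ..., A_C be a partition of {1,...,N} into nonempty clusters with indicator matrix Y ∈ {0,1}^{N×C}, let D ∈ ℝ^{N×N} be the distance matrix D_{il} = ‖x_i − x_l‖², and let G = Y (Yᵀ Y)^{−1/2}. Then the infimum over all centroid matrices M ∈ ℝ^{d×C} of ‖X − M Yᵀ‖_F², where X ∈ ℝ^{N×d} has rows x_iᵀ, equals (1/2) tr(Gᵀ D G); moreover this infimum is attained by the matrix M whose j-th column is the mean of the points in cluster A_j. -/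
/-!
With the indicator matrix `Y`, the objective splits over the clusters as
`∑ⱼ ∑_{i ∈ Aⱼ} ‖xᵢ - mⱼ‖²`, where `mⱼ` is the `j`-th column of `M`, while the `j`-th diagonal entry
of `Gᵀ D G` is `Nⱼ⁻¹ ∑_{i, l ∈ Aⱼ} ‖xᵢ - xₗ‖²`. Cluster by cluster, the parallel axis identity
`2n ∑ᵢ ‖yᵢ - m‖² = ∑ᵢ ∑ₗ ‖yᵢ - yₗ‖² + 2 ‖n m - ∑ᵢ yᵢ‖²` then gives the lower bound, with
equality exactly at the mean `m = n⁻¹ ∑ᵢ yᵢ`.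
-/
open Finset Matrix RealInnerProductSpace

section ParallelAxis

variable {ι E : Type*} [NormedAddCommGroup E] [InnerProductSpace ℝ E] (s : Finset ι) (y : ι → E)

theorem sum_norm_sub_sq (m : E) :
    ∑ i ∈ s, ‖y i - m‖ ^ 2 = ∑ i ∈ s, ‖y i‖ ^ 2 - 2 * ⟪∑ i ∈ s, y i, m⟫ + #s * ‖m‖ ^ 2 := by
  simp only [norm_sub_sq_real, sum_add_distrib, sum_sub_distrib, sum_inner, mul_sum,
    sum_const, nsmul_eq_mul]

theorem sum_sum_norm_sub_sq :
    ∑ i ∈ s, ∑ l ∈ s, ‖y i - y l‖ ^ 2 = 2 * #s * ∑ i ∈ s, ‖y i‖ ^ 2 - 2 * ‖∑ i ∈ s, y i‖ ^ 2 := by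
  rw [sum_comm]
  simp only [sum_norm_sub_sq, sum_add_distrib, sum_sub_distrib, sum_const, nsmul_eq_mul,
    ← mul_sum, ← inner_sum, real_inner_self_eq_norm_sq]
  ring

theorem two_mul_card_mul_sum_norm_sub_sq (m : E) :
    2 * #s * ∑ i ∈ s, ‖y i - m‖ ^ 2 =
      ∑ i ∈ s, ∑ l ∈ s, ‖y i - y l‖ ^ 2 + 2 * ‖(#s : ℝ) • m - ∑ i ∈ s, y i‖ ^ 2 := by
  rw [sum_norm_sub_sq, sum_sum_norm_sub_sq, norm_sub_sq_real, norm_smul, inner_smul_left,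
    Real.norm_natCast, real_inner_comm]
  simp only [conj_trivial]
  ring

variable {s}

theorem inv_two_mul_card_mul_sum_sum_norm_sub_sq_le (hs : s.Nonempty) (m : E) :
    (2 * #s : ℝ)⁻¹ * ∑ i ∈ s, ∑ l ∈ s, ‖y i - y l‖ ^ 2 ≤ ∑ i ∈ s, ‖y i - m‖ ^ 2 := by
  have hcard : (0 : ℝ) < 2 * #s := by positivity
  rw [inv_mul_le_iff₀ hcard, two_mul_card_mul_sum_norm_sub_sq]
  nlinarith [sq_nonneg ‖(#s : ℝ) • m - ∑ i ∈ s, y i‖]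

theorem sum_norm_sub_mean_sq (hs : s.Nonempty) :
    ∑ i ∈ s, ‖y i - (#s : ℝ)⁻¹ • ∑ l ∈ s, y l‖ ^ 2 =
      (2 * #s : ℝ)⁻¹ * ∑ i ∈ s, ∑ l ∈ s, ‖y i - y l‖ ^ 2 := by
  have hcard : (#s : ℝ) ≠ 0 := by positivity
  rw [eq_inv_mul_iff_mul_eq₀ (by positivity), two_mul_card_mul_sum_norm_sub_sq,
    smul_inv_smul₀ hcard]
  simp

end ParallelAxis

section ClusterIndicator

variable {ι κ : Type*} [DecidableEq κ] (R : Type*) [CommSemiring R] (a : ι → κ)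

def clusterIndicator : Matrix ι κ R := of fun i j => if a i = j then 1 else 0

variable {R} [Fintype κ]

theorem mul_transpose_clusterIndicator_apply {n : Type*} (M : Matrix n κ R) (k : n) (i : ι) :
    (M * (clusterIndicator R a)ᵀ) k i = M k (a i) := by
  simp [clusterIndicator, mul_apply, mul_ite]

variable [Fintype ι]

theorem trace_transpose_mul_mul_clusterIndicator_mul_diagonal
    (D : Matrix ι ι R) (w : κ → R) :
    trace ((clusterIndicator R a * diagonal w)ᵀ * D * (clusterIndicator R a * diagonal w)) =
      ∑ j, w j ^ 2 * ∑ i with a i = j, ∑ l with a l = j, D i l := by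
  have hG : clusterIndicator R a * diagonal w = of fun i j => if a i = j then w j else 0 := by
    ext i j
    simp [clusterIndicator, mul_diagonal]
  simp only [hG, trace, Matrix.diag, mul_apply, transpose_apply, of_apply, ite_mul, mul_ite,
    zero_mul, mul_zero, sum_ite, sum_const_zero, add_zero, mul_sum, sum_mul]
  refine sum_congr rfl fun j _ => ?_
  rw [sum_comm]
  exact sum_congr rfl fun _ _ => sum_congr rfl fun _ _ => by ring

theorem sum_sum_sq_sub_mul_transpose_clusterIndicator {n : Type*} [Fintype n]
    (x : ι → EuclideanSpace ℝ n) (M : Matrix n κ ℝ) :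
    ∑ k, ∑ i, (x i k - (M * (clusterIndicator ℝ a)ᵀ) k i) ^ 2 =
      ∑ j, ∑ i with a i = j, ‖x i - WithLp.toLp 2 (Mᵀ j)‖ ^ 2 := by
  calc
    _ = ∑ i, ‖x i - WithLp.toLp 2 (Mᵀ (a i))‖ ^ 2 := by
      simp only [mul_transpose_clusterIndicator_apply, EuclideanSpace.norm_sq_eq, PiLp.sub_apply,
        Real.norm_eq_abs, sq_abs, transpose_apply]
      exact sum_comm
    _ = ∑ j, ∑ i with a i = j, ‖x i - WithLp.toLp 2 (Mᵀ (a i))‖ ^ 2 := (sum_fiberwise _ _ _).symm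
    _ = _ := sum_congr rfl fun j _ => sum_congr rfl fun i hi => by rw [(mem_filter.1 hi).2]

end ClusterIndicator

theorem Real.rpow_neg_one_half_sq {t : ℝ} (ht : 0 ≤ t) : (t ^ (-(1 / 2) : ℝ)) ^ 2 = t⁻¹ := by
  rw [← Real.rpow_natCast, ← Real.rpow_mul ht]
  norm_num [Real.rpow_neg_one]

/-- Theorems 1/2, single view: for data points `x_1, …, x_N ∈ ℝ^d`
partitioned into nonempty clusters with indicator matrix `Y`, distance matrix
`D_{il} = ‖x_i − x_l‖²` and `G = Y (YᵀY)^{-1/2}`, the minimum over centroid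
matrices `M ∈ ℝ^{d×C}` of the k-means objective `‖Xᵀ − M Yᵀ‖_F²` equals
`(1/2) tr(Gᵀ D G)`, attained when the `j`-th column of `M` is the mean of
cluster `A_j`. -/
theorem kmeans_single_view_eq_trace (d N C : ℕ)
    (x : Fin N → EuclideanSpace ℝ (Fin d))
    (a : Fin N → Fin C) (ha : Function.Surjective a)
    (Y : Matrix (Fin N) (Fin C) ℝ)
    (hY : Y = Matrix.of fun i j => if a i = j then (1 : ℝ) else 0)
    (X : Matrix (Fin N) (Fin d) ℝ) (hX : X = Matrix.of fun i k => x i k)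
    (D : Matrix (Fin N) (Fin N) ℝ)
    (hD : D = Matrix.of fun i l => ‖x i - x l‖ ^ 2)
    (Nsize : Fin C → ℕ)
    (hsize : ∀ j, Nsize j = (Finset.univ.filter fun i => a i = j).card)
    (G : Matrix (Fin N) (Fin C) ℝ)
    (hG : G = Y * Matrix.diagonal (fun j => (Nsize j : ℝ) ^ (-(1 / 2 : ℝ))))
    (M₀ : Matrix (Fin d) (Fin C) ℝ)
    (hM₀ : M₀ = Matrix.of fun k j =>
      (∑ i ∈ Finset.univ.filter fun i => a i = j, x i k) / (Nsize j : ℝ)) :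
    (∀ M : Matrix (Fin d) (Fin C) ℝ,
        (1 / 2) * Matrix.trace (G.transpose * D * G) ≤
          ∑ k, ∑ i, (X.transpose k i - (M * Y.transpose) k i) ^ 2) ∧
    ∑ k, ∑ i, (X.transpose k i - (M₀ * Y.transpose) k i) ^ 2 =
      (1 / 2) * Matrix.trace (G.transpose * D * G) := by
  obtain rfl : Y = clusterIndicator ℝ a := hY
  simp only [hsize] at hG hM₀
  have hS (j : Fin C) : ({i | a i = j} : Finset (Fin N)).Nonempty := by
    obtain ⟨i, rfl⟩ := ha j
    exact ⟨i, by simp⟩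
  have hobj (M : Matrix (Fin d) (Fin C) ℝ) :
      ∑ k, ∑ i, (Xᵀ k i - (M * (clusterIndicator ℝ a)ᵀ) k i) ^ 2 =
        ∑ j, ∑ i with a i = j, ‖x i - WithLp.toLp 2 (Mᵀ j)‖ ^ 2 := by
    subst hX
    exact sum_sum_sq_sub_mul_transpose_clusterIndicator a x M
  have htrace : 1 / 2 * trace (Gᵀ * D * G) =
      ∑ j, (2 * #{i | a i = j} : ℝ)⁻¹ * ∑ i with a i = j, ∑ l with a l = j, ‖x i - x l‖ ^ 2 := by
    rw [hG, hD, trace_transpose_mul_mul_clusterIndicator_mul_diagonal, mul_sum]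
    refine sum_congr rfl fun j _ => ?_
    rw [Real.rpow_neg_one_half_sq (Nat.cast_nonneg _), mul_inv, ← mul_assoc, one_div]
    rfl
  have hmean (j : Fin C) :
      WithLp.toLp 2 (M₀ᵀ j) = (#{i | a i = j} : ℝ)⁻¹ • ∑ i with a i = j, x i := by
    subst hM₀
    ext k
    simp [div_eq_inv_mul]
  refine ⟨fun M => ?_, ?_⟩
  · rw [hobj, htrace]
    exact sum_le_sum fun j _ => inv_two_mul_card_mul_sum_sum_norm_sub_sq_le x (hS j) _
  · rw [hobj, htrace]
    exact sum_congr rfl fun j _ => by rw [hmean]; exact sum_norm_sub_mean_sq x (hS j)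
end

section
/- (Optimality of the view weights, Eq. (31).) Let r > 1 be a real number and let M_1, ..., M_V be strictly positive real numbers. Define α_v = M_v^{1/(1−r)} / Σ_{w=1}^V M_w^{1/(1−r)}. Then α_1, ..., α_V are nonnegative, Σ_{v=1}^V α_v = 1, and for every β_1, ..., β_V with β_v ≥ 0 and Σ_{v=1}^V β_v = 1 one has Σ_{v=1}^V α_v^r M_v ≤ Σ_{v=1}^V β_v^r M_v. -/
/-! The objective `∑ β_v ^ r M_v` is convex, and at `α` its gradient `r α_v ^ (r - 1) M_v` is
the same constant `r S ^ (1 - r)` in every coordinate, where `S = ∑_w M_w ^ (1 / (1 - r))`.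
Summing the tangent-line inequalities `α_v ^ r M_v + r S ^ (1 - r) (β_v - α_v) ≤ β_v ^ r M_v`
over `v`, the linear terms cancel because `α` and `β` have the same total mass. -/

open Finset Real

theorem rpow_add_mul_rpow_sub_one_mul_sub_le_rpow {r a b : ℝ} (hr : 1 ≤ r) (ha : 0 < a)
    (hb : 0 ≤ b) : a ^ r + r * a ^ (r - 1) * (b - a) ≤ b ^ r := by
  have hbernoulli : 1 + r * (b / a - 1) ≤ (b / a) ^ r := by
    simpa using one_add_mul_self_le_rpow_one_add (s := b / a - 1)
      (by linarith [div_nonneg hb ha.le]) hr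
  have hpow : a ^ r = a ^ (r - 1) * a := by rw [← rpow_add_one ha.ne', sub_add_cancel]
  calc a ^ r + r * a ^ (r - 1) * (b - a) = a ^ r * (1 + r * (b / a - 1)) := by
        rw [hpow]; field_simp
    _ ≤ a ^ r * (b / a) ^ r := mul_le_mul_of_nonneg_left hbernoulli (rpow_nonneg ha.le r)
    _ = b ^ r := by rw [div_rpow hb ha.le]; field_simp [(rpow_pos_of_pos ha r).ne']

theorem sum_rpow_mul_le_of_rpow_sub_one_mul_eq {ι : Type*} [Fintype ι] {r c : ℝ} (hr : 1 ≤ r)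
    {M α β : ι → ℝ} (hM : ∀ i, 0 ≤ M i) (hα : ∀ i, 0 < α i) (hβ : ∀ i, 0 ≤ β i)
    (hsum : ∑ i, α i = ∑ i, β i) (hc : ∀ i, α i ^ (r - 1) * M i = c) :
    ∑ i, α i ^ r * M i ≤ ∑ i, β i ^ r * M i := by
  have htangent : ∀ i, α i ^ r * M i + r * c * (β i - α i) ≤ β i ^ r * M i := fun i => by
    rw [← hc i]
    nlinarith [mul_le_mul_of_nonneg_right
      (rpow_add_mul_rpow_sub_one_mul_sub_le_rpow hr (hα i) (hβ i)) (hM i)]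
  calc ∑ i, α i ^ r * M i = ∑ i, (α i ^ r * M i + r * c * (β i - α i)) := by
        rw [sum_add_distrib, ← mul_sum, sum_sub_distrib, hsum, sub_self, mul_zero, add_zero]
    _ ≤ ∑ i, β i ^ r * M i := sum_le_sum fun i _ => htangent i

theorem div_rpow_sub_one_mul_eq {r m S : ℝ} (hr : r ≠ 1) (hm : 0 < m) (hS : 0 < S) :
    (m ^ (1 / (1 - r)) / S) ^ (r - 1) * m = S ^ (1 - r) := by
  have hexp : 1 / (1 - r) * (r - 1) = -1 := by
    field_simp [sub_ne_zero.mpr hr.symm]; ring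
  rw [div_rpow (rpow_nonneg hm.le _) hS.le, ← rpow_mul hm.le, hexp, rpow_neg_one,
    div_mul_eq_mul_div, inv_mul_cancel₀ hm.ne', one_div, ← rpow_neg hS.le, neg_sub]

/-- optimality of the view weights, Eq. (31): for `r > 1` and
positive `M_1, …, M_V`, the weights `α_v = M_v^{1/(1−r)} / ∑_w M_w^{1/(1−r)}`
are nonnegative, sum to `1`, and minimize `∑_v β_v^r M_v` over the probability
simplex. -/
theorem view_weights_optimal (V : ℕ) (hV : 0 < V) (r : ℝ) (hr : 1 < r)
    (M : Fin V → ℝ) (hM : ∀ v, 0 < M v)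
    (α : Fin V → ℝ)
    (hα : ∀ v, α v = M v ^ (1 / (1 - r)) / ∑ w, M w ^ (1 / (1 - r))) :
    (∀ v, 0 ≤ α v) ∧ (∑ v, α v = 1) ∧
    ∀ β : Fin V → ℝ, (∀ v, 0 ≤ β v) → (∑ v, β v = 1) →
      ∑ v, α v ^ r * M v ≤ ∑ v, β v ^ r * M v := by
  set S := ∑ w, M w ^ (1 / (1 - r)) with hS_def
  have hS : 0 < S := sum_pos (fun w _ => rpow_pos_of_pos (hM w) _)
    (univ_nonempty_iff.mpr (Fin.pos_iff_nonempty.mp hV))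
  have hα_pos : ∀ v, 0 < α v := fun v => hα v ▸ div_pos (rpow_pos_of_pos (hM v) _) hS
  have hα_sum : ∑ v, α v = 1 := by
    rw [sum_congr rfl fun v _ => hα v, ← sum_div, ← hS_def, div_self hS.ne']
  refine ⟨fun v => (hα_pos v).le, hα_sum, fun β hβ hβ_sum => ?_⟩
  exact sum_rpow_mul_le_of_rpow_sub_one_mul_eq hr.le (fun v => (hM v).le) hα_pos hβ
    (hα_sum.trans hβ_sum.symm) fun v => hα v ▸ div_rpow_sub_one_mul_eq hr.ne' (hM v) hS
end
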